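/- For every nontrivial x ∈ F₂ there exists y ∈ {a, b} such that γ(x·y) ≠ γ(x)·γ(y). Consequently, the only element x ∈ F₂ satisfying γ(x·y) = γ(x)·γ(y) for all y ∈ F₂ is x = 1. -/
import Mathlib


/-- `F2` is the free group on two generators. -/
abbrev F2 := FreeGroup (Fin 2)

/-- The first generator `a`. -/
def a : F2 := FreeGroup.of 0

/-- The second generator `b`. -/
def b : F2 := FreeGroup.of 1

/-- The automorphism `ι` of `F2` determined by `ι a = a⁻¹` and `ι b = b⁻¹`
(given here as the induced group homomorphism, which is in fact an automorphism). -/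
def iota : F2 →* F2 := FreeGroup.lift fun i => (FreeGroup.of i)⁻¹

/-- `beginsWith ℓ x` means that the reduced word of `x` is nonempty and its first letter
is the generator `ℓ` or its inverse. -/
def beginsWith (ℓ : Fin 2) (x : F2) : Prop :=
  (FreeGroup.toWord x).head?.map Prod.fst = some ℓ

instance (ℓ : Fin 2) (x : F2) : Decidable (beginsWith ℓ x) := by
  unfold beginsWith; infer_instance

/-- The map `γ : F2 → F2`: `γ x = x` if the reduced word of `x` begins with `a` or `a⁻¹`,
and `γ x = ι x` otherwise (in particular `γ 1 = 1`). -/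
def gamma (x : F2) : F2 := if beginsWith 0 x then x else iota x

section Aux

variable {α : Type*} [DecidableEq α]

lemma aux_reduced_cons {x : α × Bool} {L : List (α × Bool)}
    (h : FreeGroup.reduce (x :: L) = x :: L) :
    FreeGroup.reduce L = L := by
  have hlen := (FreeGroup.Red.sublist (FreeGroup.reduce.red (L := L))).length_le
  rw [FreeGroup.reduce.cons] at h
  rcases hM : FreeGroup.reduce L with _ | ⟨hd, tl⟩
  · rw [hM] at h
    simp at h
    simp [h, hM]
  · rw [hM] at h
    by_cases hc : x.1 = hd.1 ∧ x.2 = !hd.2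
    · simp only [hc, if_pos, and_self, if_true] at h
      have : tl.length = L.length + 1 := by rw [h]; simp
      rw [hM] at hlen
      simp at hlen
      omega
    · simp only [if_neg hc] at h
      exact List.cons_injective h

/-- no cancellation at the head of a reduced word -/
lemma aux_reduced_cons_ne {x y : α × Bool} {T : List (α × Bool)}
    (h : FreeGroup.reduce (x :: y :: T) = x :: y :: T) : ¬(x.1 = y.1 ∧ x.2 = !y.2) := by
  have ht : FreeGroup.reduce (y :: T) = y :: T := aux_reduced_cons h
  rw [FreeGroup.reduce.cons, ht] at h
  intro hc
  simp only [hc, and_self, if_true] at h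
  have := congrArg List.length h
  simp at this
  omega

lemma aux_reduce_append (m : α × Bool) : ∀ (L : List (α × Bool)), FreeGroup.reduce L = L →
    FreeGroup.reduce (L ++ [m]) = L ++ [m] ∨
      ∃ L', L = L' ++ [(m.1, !m.2)] ∧ FreeGroup.reduce (L ++ [m]) = L' := by
  intro L
  induction L with
  | nil => intro _; left; simp [FreeGroup.reduce_singleton]
  | cons x L ih =>
    intro h
    have hL : FreeGroup.reduce L = L := aux_reduced_cons h
    rcases ih hL with h1 | ⟨L', hL', h2⟩
    · rw [List.cons_append, FreeGroup.reduce.cons, h1]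
      rcases hE : L with _ | ⟨y, T⟩
      · simp only [hE, List.nil_append]
        by_cases hc : x.1 = m.1 ∧ x.2 = !m.2
        · right
          refine ⟨[], ?_, ?_⟩
          · simp [Prod.ext_iff, hc.1, hc.2]
          · simp [hc]
        · left; simp [hc]
      · have hne := aux_reduced_cons_ne (hE ▸ h)
        subst hE
        simp only [List.cons_append, if_neg hne]
        left; trivial
    · right
      rw [List.cons_append, FreeGroup.reduce.cons, h2]
      rcases hE : L' with _ | ⟨z, T⟩
      · subst hE
        refine ⟨[x], by simp [hL'], rfl⟩
      · subst hE
        have hxz : ¬(x.1 = z.1 ∧ x.2 = !z.2) := by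
          have : FreeGroup.reduce (x :: z :: (T ++ [(m.1, !m.2)])) =
              x :: z :: (T ++ [(m.1, !m.2)]) := by
            simpa [hL'] using h
          exact aux_reduced_cons_ne this
        refine ⟨x :: z :: T, by simp [hL'], by simp [hxz]⟩

end Aux

lemma aux_toWord_mul_of (x : F2) (ℓ' : Fin 2) :
    (x * FreeGroup.of ℓ').toWord = FreeGroup.reduce (x.toWord ++ [(ℓ', true)]) := by
  conv_lhs => rw [← FreeGroup.mk_toWord (x := x),
    show (FreeGroup.of ℓ' : F2) = FreeGroup.mk [(ℓ', true)] from rfl,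
    FreeGroup.mul_mk, FreeGroup.toWord_mk]

lemma aux_beginsWith_mul_of {ℓ ℓ' : Fin 2} {x : F2} (h : beginsWith ℓ x) (hne : ℓ' ≠ ℓ) :
    beginsWith ℓ (x * FreeGroup.of ℓ') := by
  unfold beginsWith at h ⊢
  rw [aux_toWord_mul_of]
  rcases aux_reduce_append ((ℓ', true) : Fin 2 × Bool) x.toWord (FreeGroup.reduce_toWord x)
    with h1 | ⟨L', hL', h2⟩
  · rw [h1]
    rcases hE : x.toWord with _ | ⟨hd, tl⟩
    · rw [hE] at h; simp at h
    · rw [hE] at h; simpa using h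
  · rw [h2]
    rcases hE : L' with _ | ⟨hd, tl⟩
    · subst hE
      rw [hL'] at h
      simp at h
      exact absurd h hne
    · subst hE
      rw [hL'] at h
      simpa using h

lemma aux_b_ne_b_inv : (b : F2) ≠ b⁻¹ := by
  intro h
  have := congrArg FreeGroup.toWord h
  simp [b, FreeGroup.toWord_of, FreeGroup.toWord_inv, FreeGroup.invRev] at this

lemma aux_a_ne_a_inv : (a : F2)⁻¹ ≠ a := by
  intro h
  have := congrArg FreeGroup.toWord h
  simp [a, FreeGroup.toWord_of, FreeGroup.toWord_inv, FreeGroup.invRev] at this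

lemma aux_beginsWith_a : beginsWith 0 a := by
  unfold beginsWith
  rw [show (a : F2) = FreeGroup.of 0 from rfl, FreeGroup.toWord_of]
  rfl

lemma aux_not_beginsWith_b : ¬ beginsWith 0 b := by
  unfold beginsWith
  rw [show (b : F2) = FreeGroup.of 1 from rfl, FreeGroup.toWord_of]
  simp

lemma aux_gamma_a : gamma a = a := by rw [gamma, if_pos aux_beginsWith_a]

lemma aux_gamma_b : gamma b = b⁻¹ := by
  rw [gamma, if_neg aux_not_beginsWith_b, b, iota, FreeGroup.lift_apply_of]

lemma aux_not_beginsWith_zero {x : F2} (h : beginsWith 1 x) : ¬ beginsWith 0 x := by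
  intro hc
  unfold beginsWith at h hc
  rw [hc] at h
  exact absurd (Option.some.inj h) (by decide)

/-- For every nontrivial `x ∈ F₂` there is `y ∈ {a, b}` with `γ (x*y) ≠ γ x * γ y`;
consequently the only `x` with `γ (x*y) = γ x * γ y` for all `y` is `x = 1`. -/
theorem gamma_not_multiplicative :
    (∀ x : F2, x ≠ 1 → ∃ y ∈ ({a, b} : Set F2), gamma (x * y) ≠ gamma x * gamma y) ∧
    (∀ x : F2, (∀ y : F2, gamma (x * y) = gamma x * gamma y) → x = 1) := by
  have key : ∀ x : F2, x ≠ 1 → ∃ y ∈ ({a, b} : Set F2),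
      gamma (x * y) ≠ gamma x * gamma y := by
    intro x hx
    have hw : x.toWord ≠ [] := fun h => hx (FreeGroup.toWord_eq_nil_iff.mp h)
    rcases hE : x.toWord with _ | ⟨hd, tl⟩
    · exact absurd hE hw
    have hbeg : beginsWith hd.1 x := by unfold beginsWith; rw [hE]; rfl
    have h01 : ∀ i : Fin 2, i = 0 ∨ i = 1 := by decide
    rcases h01 hd.1 with h0 | h1
    · -- x begins with a; take y = b
      refine ⟨b, Or.inr rfl, ?_⟩
      have hb0 : beginsWith 0 x := h0 ▸ hbeg
      have hxb : beginsWith 0 (x * b) := aux_beginsWith_mul_of hb0 (by decide)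
      rw [gamma, if_pos hxb, gamma, if_pos hb0, aux_gamma_b]
      intro h
      exact aux_b_ne_b_inv (mul_left_cancel h)
    · -- x begins with b; take y = a
      refine ⟨a, Or.inl rfl, ?_⟩
      have hb1 : beginsWith 1 x := h1 ▸ hbeg
      have hx0 : ¬ beginsWith 0 x := aux_not_beginsWith_zero hb1
      have hxa : beginsWith 1 (x * a) := aux_beginsWith_mul_of hb1 (by decide)
      rw [gamma, if_neg (aux_not_beginsWith_zero hxa), gamma, if_neg hx0, aux_gamma_a]
      rw [show (a : F2) = FreeGroup.of 0 from rfl, map_mul, iota, FreeGroup.lift_apply_of]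
      intro h
      exact aux_a_ne_a_inv (mul_left_cancel h)
  refine ⟨key, fun x hx => ?_⟩
  by_contra hne
  obtain ⟨y, _, hy⟩ := key x hne
  exact hy (hx y)
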